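/- Let d ≥ 1, h > 0, T ≥ 0, δ > 0, and let ũ, ṽ : [0, T+δ] → ℝ^d be continuous functions that coincide on [0, T]. Then for every t ∈ [T, T+δ], |𝓕^(h)(ũ)(t) − 𝓕^(h)(ṽ)(t)| ≤ 4 (t/h²)(t − T) C_g ‖ũ − ṽ‖_{∞,[T,T+δ]}, where C_g = ∫_{ℝ^d} |η| |g(η)| dη. -/

import Mathlib

/-!
The factor `r` cancels the `1 / (h r)` of the average, so for fixed `η` and `r ∈ [0, t/h]` the two
phases differ by `(2/h) ⟪η, ∫_{t-hr}^t (ũ - ṽ)⟫`. Since `ũ = ṽ` on `[0, T]`, that integral only sees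
`[T, t]` and has norm at most `(t - T) M`, `M` the sup of `‖ũ - ṽ‖` on `[T, T+δ]`. As `cos` is
`1`-Lipschitz, the inner integrals differ by at most `(t/h) (2/h) ‖η‖ (t - T) M`; integrating against
`‖g‖` and the prefactor `2` give the bound. Continuity only serves to make every integral exist,
after replacing `ũ, ṽ` by continuous extensions of their restrictions to `[0, T+δ]`.
-/

open MeasureTheory Filter Set
open scoped RealInnerProductSpace Topology ENNReal

noncomputable section

abbrev E (d : ℕ) := EuclideanSpace ℝ (Fin d)

/-- `g(η) = η |f(η)|²`. -/
def gfun {d : ℕ} (f : SchwartzMap (E d) ℂ) (η : E d) : E d := ‖f η‖ ^ 2 • η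

/-- the average `⨍_a^b u(σ) dσ`. -/
def intAvg {d : ℕ} (u : ℝ → E d) (a b : ℝ) : E d := (b - a)⁻¹ • ∫ σ in a..b, u σ

/-- `𝓕^(h)(u)(t)`; since `g` is real-valued, taking the real part of the complex
integral amounts to replacing `e^{-irθ}` by `cos (rθ)`. -/
def calF {d : ℕ} (f : SchwartzMap (E d) ℂ) (h : ℝ) (u : ℝ → E d) (t : ℝ) : E d :=
  (-2 : ℝ) • ∫ η, (∫ r in (0:ℝ)..(t / h),
    Real.cos (r * (‖η‖ ^ 2 - 2 * ⟪η, intAvg u (t - h * r) t⟫))) • gfun f η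

/-- The phase of `calF` with the factor `r` cancelled against the `1 / (h r)` of the average, which
makes it continuous in `r` (the average itself has the junk value `0` at `r = 0`). -/
def phase {d : ℕ} (h : ℝ) (u : ℝ → E d) (t r : ℝ) (η : E d) : ℝ :=
  r * ‖η‖ ^ 2 - 2 * h⁻¹ * ⟪η, ∫ σ in (t - h * r)..t, u σ⟫

def oscIntegral {d : ℕ} (h : ℝ) (u : ℝ → E d) (t : ℝ) (η : E d) : ℝ :=
  ∫ r in (0:ℝ)..(t / h), Real.cos (phase h u t r η)

theorem mul_sub_inner_intAvg_eq_phase {d : ℕ} {h : ℝ} (hh : h ≠ 0) (u : ℝ → E d) (t r : ℝ)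
    (η : E d) : r * (‖η‖ ^ 2 - 2 * ⟪η, intAvg u (t - h * r) t⟫) = phase h u t r η := by
  rcases eq_or_ne r 0 with rfl | hr
  · simp [phase]
  · rw [phase, intAvg, sub_sub_cancel, real_inner_smul_right]
    field_simp

theorem calF_eq_integral_oscIntegral_smul {d : ℕ} (f : SchwartzMap (E d) ℂ) {h : ℝ} (hh : h ≠ 0)
    (u : ℝ → E d) (t : ℝ) :
    calF f h u t = (-2 : ℝ) • ∫ η, oscIntegral h u t η • gfun f η := by
  simp only [calF, oscIntegral, mul_sub_inner_intAvg_eq_phase hh]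

theorem oscIntegral_congr {d : ℕ} {h t : ℝ} (hh : 0 < h) (ht : 0 ≤ t) {u u' : ℝ → E d}
    (huu' : EqOn u u' (Icc 0 t)) : oscIntegral h u t = oscIntegral h u' t := by
  funext η
  refine intervalIntegral.integral_congr fun r hr => ?_
  rw [uIcc_of_le (div_nonneg ht hh.le)] at hr
  have hhr : h * r ≤ t := (le_div_iff₀' hh).mp hr.2
  have hsub : uIcc (t - h * r) t ⊆ Icc 0 t := by
    rw [uIcc_of_le (by nlinarith [hr.1])]
    exact Icc_subset_Icc_left (by linarith)
  simp only [phase, intervalIntegral.integral_congr (huu'.mono hsub)]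

theorem calF_congr {d : ℕ} (f : SchwartzMap (E d) ℂ) {h t : ℝ} (hh : 0 < h) (ht : 0 ≤ t)
    {u u' : ℝ → E d} (huu' : EqOn u u' (Icc 0 t)) : calF f h u t = calF f h u' t := by
  rw [calF_eq_integral_oscIntegral_smul f hh.ne', calF_eq_integral_oscIntegral_smul f hh.ne',
    oscIntegral_congr hh ht huu']

theorem continuous_phase {d : ℕ} {u : ℝ → E d} (hu : Continuous u) (h t : ℝ) :
    Continuous fun p : E d × ℝ => phase h u t p.2 p.1 := by
  have hprim : Continuous fun r : ℝ => ∫ σ in (t - h * r)..t, u σ := by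
    rw [show (fun r : ℝ => ∫ σ in (t - h * r)..t, u σ) = fun r => -∫ σ in t..(t - h * r), u σ
      from funext fun r => intervalIntegral.integral_symm _ _]
    exact ((intervalIntegral.continuous_primitive (fun a b => hu.intervalIntegrable a b) t).comp
      (by fun_prop)).neg
  exact (continuous_snd.mul (continuous_fst.norm.pow 2)).sub
    (continuous_const.mul (continuous_fst.inner (hprim.comp continuous_snd)))

theorem continuous_oscIntegral {d : ℕ} {u : ℝ → E d} (hu : Continuous u) (h t : ℝ) :
    Continuous (oscIntegral h u t) :=
  intervalIntegral.continuous_parametric_intervalIntegral_of_continuous'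
    (f := fun η r => Real.cos (phase h u t r η))
    (Real.continuous_cos.comp (continuous_phase hu h t)) _ _

theorem abs_oscIntegral_le {d : ℕ} (h : ℝ) (u : ℝ → E d) (t : ℝ) (η : E d) :
    |oscIntegral h u t η| ≤ |t / h| := by
  simpa [oscIntegral] using intervalIntegral.norm_integral_le_of_norm_le_const (a := 0)
    (b := t / h) (C := 1) (f := fun r => Real.cos (phase h u t r η))
    fun r _ => Real.abs_cos_le_one _

theorem continuous_gfun {d : ℕ} (f : SchwartzMap (E d) ℂ) : Continuous (gfun f) :=
  (f.continuous.norm.pow 2).smul continuous_id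

theorem integrable_pow_mul_norm_gfun {d : ℕ} (f : SchwartzMap (E d) ℂ) (k : ℕ) :
    Integrable fun η : E d => ‖η‖ ^ k * ‖gfun f η‖ := by
  refine ((f.integrable_pow_mul volume (k + 1)).mul_const (SchwartzMap.seminorm ℝ 0 0 f)).mono'
    ((continuous_norm.pow k).mul (continuous_gfun f).norm).aestronglyMeasurable
    (Eventually.of_forall fun η => ?_)
  have hf := SchwartzMap.norm_le_seminorm ℝ f η
  rw [Real.norm_of_nonneg (by positivity), gfun, norm_smul, Real.norm_of_nonneg (by positivity)]
  calc ‖η‖ ^ k * (‖f η‖ ^ 2 * ‖η‖) = ‖η‖ ^ (k + 1) * ‖f η‖ * ‖f η‖ := by ring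
    _ ≤ ‖η‖ ^ (k + 1) * ‖f η‖ * SchwartzMap.seminorm ℝ 0 0 f := by gcongr

theorem integrable_oscIntegral_smul_gfun {d : ℕ} (f : SchwartzMap (E d) ℂ) {u : ℝ → E d}
    (hu : Continuous u) (h t : ℝ) :
    Integrable fun η => oscIntegral h u t η • gfun f η := by
  have hg : Integrable (gfun f) :=
    (integrable_pow_mul_norm_gfun f 0).mono' (continuous_gfun f).aestronglyMeasurable
      (Eventually.of_forall fun η => by simp)
  exact hg.bdd_smul |t / h| (continuous_oscIntegral hu h t).aestronglyMeasurable
    (Eventually.of_forall fun η => abs_oscIntegral_le h u t η)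

theorem norm_intervalIntegral_le_of_eqOn_zero {F : Type*} [NormedAddCommGroup F]
    [NormedSpace ℝ F] {w : ℝ → F} {a t T M : ℝ} (hat : a ≤ t) (hTt : T ≤ t) (hM : 0 ≤ M)
    (hw : IntervalIntegrable w volume a t) (hzero : EqOn w 0 (Icc a T))
    (hbound : ∀ s ∈ Ioc T t, ‖w s‖ ≤ M) : ‖∫ s in a..t, w s‖ ≤ (t - T) * M := by
  rcases le_or_gt a T with haT | hTa
  · have hsplit := intervalIntegral.integral_add_adjacent_intervals
      (hw.mono_set (by rw [uIcc_of_le haT, uIcc_of_le hat]; exact Icc_subset_Icc_right hTt))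
      (hw.mono_set (by rw [uIcc_of_le hTt, uIcc_of_le hat]; exact Icc_subset_Icc_left haT))
    have hvanish : ∫ s in a..T, w s = 0 := by
      rw [intervalIntegral.integral_congr (g := 0) (by rwa [uIcc_of_le haT])]
      simp
    rw [← hsplit, hvanish, zero_add]
    calc ‖∫ s in T..t, w s‖ ≤ M * |t - T| :=
          intervalIntegral.norm_integral_le_of_norm_le_const (by rwa [uIoc_of_le hTt])
      _ = (t - T) * M := by rw [abs_of_nonneg (sub_nonneg.2 hTt), mul_comm]
  · calc ‖∫ s in a..t, w s‖ ≤ M * |t - a| :=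
          intervalIntegral.norm_integral_le_of_norm_le_const fun s hs => by
            rw [uIoc_of_le hat] at hs
            exact hbound s ⟨hTa.trans hs.1, hs.2⟩
      _ ≤ (t - T) * M := by rw [abs_of_nonneg (sub_nonneg.2 hat)]; nlinarith

theorem abs_oscIntegral_sub_le {d : ℕ} {h t K : ℝ} (hh : 0 < h) (ht : 0 ≤ t) {u v : ℝ → E d}
    (hu : Continuous u) (hv : Continuous v)
    (hK : ∀ r ∈ Icc 0 (t / h), ‖∫ σ in (t - h * r)..t, (u σ - v σ)‖ ≤ K) (η : E d) :
    |oscIntegral h u t η - oscIntegral h v t η| ≤ 2 * (t / h ^ 2) * K * ‖η‖ := by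
  have hth : 0 ≤ t / h := div_nonneg ht hh.le
  have hcos : ∀ p : ℝ → E d, Continuous p →
      IntervalIntegrable (fun r => Real.cos (phase h p t r η)) volume 0 (t / h) := fun p hp =>
    (Real.continuous_cos.comp ((continuous_phase hp h t).comp
      (continuous_const.prodMk continuous_id))).intervalIntegrable _ _
  rw [oscIntegral, oscIntegral, ← intervalIntegral.integral_sub (hcos u hu) (hcos v hv),
    ← Real.norm_eq_abs]
  calc _ ≤ 2 * h⁻¹ * (‖η‖ * K) * |t / h - 0| :=
        intervalIntegral.norm_integral_le_of_norm_le_const fun r hr => ?_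
    _ = 2 * (t / h ^ 2) * K * ‖η‖ := by rw [sub_zero, abs_of_nonneg hth]; field_simp
  rw [uIoc_of_le hth] at hr
  have hdiff : (∫ σ in (t - h * r)..t, u σ) - ∫ σ in (t - h * r)..t, v σ =
      ∫ σ in (t - h * r)..t, (u σ - v σ) :=
    (intervalIntegral.integral_sub (hu.intervalIntegrable _ _) (hv.intervalIntegrable _ _)).symm
  calc ‖Real.cos (phase h u t r η) - Real.cos (phase h v t r η)‖
      ≤ |phase h u t r η - phase h v t r η| := Real.abs_cos_sub_cos_le _ _
    _ = |2 * h⁻¹ * ⟪η, ∫ σ in (t - h * r)..t, (u σ - v σ)⟫| := by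
        rw [abs_sub_comm, ← hdiff, inner_sub_right, phase, phase]
        congr 1
        ring
    _ ≤ 2 * h⁻¹ * (‖η‖ * K) := by
        rw [abs_mul, abs_of_pos (by positivity : (0 : ℝ) < 2 * h⁻¹)]
        gcongr
        exact (abs_real_inner_le_norm _ _).trans (by gcongr; exact hK r (Ioc_subset_Icc_self hr))

theorem norm_calF_sub_le {d : ℕ} (f : SchwartzMap (E d) ℂ) {h : ℝ} (hh : h ≠ 0)
    {u v : ℝ → E d} (hu : Continuous u) (hv : Continuous v) {t L : ℝ}
    (hL : ∀ η, |oscIntegral h u t η - oscIntegral h v t η| ≤ L * ‖η‖) :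
    ‖calF f h u t - calF f h v t‖ ≤ 2 * L * ∫ η, ‖η‖ * ‖gfun f η‖ := by
  rw [calF_eq_integral_oscIntegral_smul f hh, calF_eq_integral_oscIntegral_smul f hh, ← smul_sub,
    ← integral_sub (integrable_oscIntegral_smul_gfun f hu h t)
      (integrable_oscIntegral_smul_gfun f hv h t), norm_smul, mul_assoc, ← integral_const_mul]
  have hweight := (integrable_pow_mul_norm_gfun f 1).const_mul L
  simp only [pow_one] at hweight
  refine mul_le_mul (by norm_num) (norm_integral_le_of_norm_le hweight
    (Eventually.of_forall fun η => ?_)) (norm_nonneg _) zero_le_two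
  rw [← sub_smul, norm_smul, Real.norm_eq_abs, ← mul_assoc]
  exact mul_le_mul_of_nonneg_right (hL η) (norm_nonneg _)

theorem ContinuousOn.exists_continuous_eqOn_Icc {X : Type*} [TopologicalSpace X] {a b : ℝ}
    (hab : a ≤ b) {u : ℝ → X} (hu : ContinuousOn u (Icc a b)) :
    ∃ u' : ℝ → X, Continuous u' ∧ EqOn u u' (Icc a b) :=
  ⟨IccExtend hab ((Icc a b).domRestrict u), hu.domRestrict.Icc_extend',
    fun _ hs => (IccExtend_of_mem hab ((Icc a b).domRestrict u) hs).symm⟩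

theorem statement1_general (d : ℕ) (f : SchwartzMap (E d) ℂ) (h : ℝ) (hh : 0 < h)
    (T δ : ℝ) (hT : 0 ≤ T) (u v : ℝ → E d)
    (hu : ContinuousOn u (Set.Icc 0 (T + δ))) (hv : ContinuousOn v (Set.Icc 0 (T + δ)))
    (huv : Set.EqOn u v (Set.Icc 0 T)) :
    ∀ t ∈ Set.Icc T (T + δ),
      ‖calF f h u t - calF f h v t‖ ≤
        4 * (t / h ^ 2) * (t - T) * (∫ η, ‖η‖ * ‖gfun f η‖) *
          sSup ((fun s => ‖u s - v s‖) '' Set.Icc T (T + δ)) := by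
  rintro t ⟨hTt, htδ⟩
  have ht : 0 ≤ t := hT.trans hTt
  set M := sSup ((fun s => ‖u s - v s‖) '' Icc T (T + δ))
  have hIcc : Icc T (T + δ) ⊆ Icc 0 (T + δ) := Icc_subset_Icc_left hT
  have hM : ∀ s ∈ Icc T (T + δ), ‖u s - v s‖ ≤ M := fun s hs =>
    le_csSup (isCompact_Icc.image_of_continuousOn
      ((hu.mono hIcc).sub (hv.mono hIcc)).norm).bddAbove ⟨s, hs, rfl⟩
  obtain ⟨u', hu', huu'⟩ := hu.exists_continuous_eqOn_Icc (ht.trans htδ)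
  obtain ⟨v', hv', hvv'⟩ := hv.exists_continuous_eqOn_Icc (ht.trans htδ)
  have huv' : EqOn u' v' (Icc 0 T) := fun s hs => by
    have hs' : s ∈ Icc 0 (T + δ) := Icc_subset_Icc_right (hTt.trans htδ) hs
    rw [← huu' hs', ← hvv' hs', huv hs]
  have hM' : ∀ s ∈ Ioc T t, ‖u' s - v' s‖ ≤ M := fun s hs => by
    have hs' : s ∈ Icc T (T + δ) := ⟨hs.1.le, hs.2.trans htδ⟩
    rw [← huu' (hIcc hs'), ← hvv' (hIcc hs')]
    exact hM s hs'
  have hK : ∀ r ∈ Icc 0 (t / h), ‖∫ σ in (t - h * r)..t, (u' σ - v' σ)‖ ≤ (t - T) * M := by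
    rintro r ⟨hr0, hrt⟩
    have hhr : h * r ≤ t := (le_div_iff₀' hh).mp hrt
    exact norm_intervalIntegral_le_of_eqOn_zero (by nlinarith) hTt
      ((norm_nonneg _).trans (hM t ⟨hTt, htδ⟩)) ((hu'.sub hv').intervalIntegrable _ _)
      (fun s hs => sub_eq_zero.2 (huv' ⟨by linarith [hs.1], hs.2⟩)) hM'
  have hsub : Icc 0 t ⊆ Icc 0 (T + δ) := Icc_subset_Icc_right htδ
  rw [calF_congr f hh ht (huu'.mono hsub), calF_congr f hh ht (hvv'.mono hsub)]
  calc _ ≤ 2 * (2 * (t / h ^ 2) * ((t - T) * M)) * ∫ η, ‖η‖ * ‖gfun f η‖ :=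
        norm_calF_sub_le f hh.ne' hu' hv' (abs_oscIntegral_sub_le hh ht hu' hv' hK)
    _ = _ := by ring

/-- if `ũ, ṽ` are continuous on `[0, T+δ]` and coincide on `[0, T]`, then for
`t ∈ [T, T+δ]`, `|𝓕^(h)(ũ)(t) − 𝓕^(h)(ṽ)(t)| ≤ 4 (t/h²)(t−T) C_g ‖ũ−ṽ‖_{∞,[T,T+δ]}` with
`C_g = ∫ |η| |g(η)| dη`. -/
theorem statement1 (d : ℕ) (hd : 1 ≤ d) (f : SchwartzMap (E d) ℂ) (h : ℝ) (hh : 0 < h)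
    (T δ : ℝ) (hT : 0 ≤ T) (hδ : 0 < δ) (u v : ℝ → E d)
    (hu : ContinuousOn u (Set.Icc 0 (T + δ))) (hv : ContinuousOn v (Set.Icc 0 (T + δ)))
    (huv : Set.EqOn u v (Set.Icc 0 T)) :
    ∀ t ∈ Set.Icc T (T + δ),
      ‖calF f h u t - calF f h v t‖ ≤
        4 * (t / h ^ 2) * (t - T) * (∫ η, ‖η‖ * ‖gfun f η‖) *
          sSup ((fun s => ‖u s - v s‖) '' Set.Icc T (T + δ)) :=
  statement1_general d f h hh T δ hT u v hu hv huv
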